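/- Adding a single edge uv to a graph G decreases the total strong residual anonymity by at most 2k: the edge uv can decrease the strong residual anonymity only of original neighbors of u and of v in G, each by at most 1, and there are at most 2k deficient such neighbors. -/

import Mathlib

open scoped Classical in
/-- The number of vertices `u ≠ v` with `|N_G(v) ∩ N_H(u)| ≥ 1`, where `G` is the
original graph and `H` a supergraph. -/
noncomputable def strongSharingCount {V : Type*} [Fintype V] (G H : SimpleGraph V)
    (v : V) : ℕ :=
  (Finset.univ.filter
    (fun u => u ≠ v ∧ (G.neighborSet v ∩ H.neighborSet u).Nonempty)).card

/-- Total strong residual anonymity of supergraph `H` w.r.t. original graph `G`. -/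
noncomputable def strongTotalResidual {V : Type*} [Fintype V] (G H : SimpleGraph V)
    (k : ℕ) : ℕ :=
  ∑ v : V, (k - strongSharingCount G H v)

/-!
Adding `uv` makes `u` a new sharer only of the `G`-neighbours of `v`, and `v` only of those of
`u`, so a vertex loses at most one unit of residual per endpoint, and only a deficient vertex loses
anything. Two `G`-neighbours of `x` share `x` in the supergraph `H`, so a deficient one among them
already counts all the others; hence `x` has at most `k` deficient `G`-neighbours.
-/

open Finset SimpleGraph

section

open scoped Classical

variable {V : Type*} [Fintype V] (G : SimpleGraph V)

lemma strongSharingCount_mono {H H' : SimpleGraph V} (h : H ≤ H') (w : V) :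
    strongSharingCount G H w ≤ strongSharingCount G H' w :=
  card_le_card fun _ hx => by
    simp only [mem_filter, mem_univ, true_and] at hx ⊢
    obtain ⟨hne, y, hwy, hxy⟩ := hx
    exact ⟨hne, y, hwy, h hxy⟩

lemma strongSharingCount_sup_edge_le (H : SimpleGraph V) (u v w : V) :
    strongSharingCount G (H ⊔ edge u v) w ≤
      strongSharingCount G H w + (if G.Adj w v then 1 else 0) + (if G.Adj w u then 1 else 0) := by
  have hsub : ({x | x ≠ w ∧ (G.neighborSet w ∩ (H ⊔ edge u v).neighborSet x).Nonempty} :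
        Finset V) ⊆
      ({x | x ≠ w ∧ (G.neighborSet w ∩ H.neighborSet x).Nonempty} : Finset V) ∪
        ((if G.Adj w v then {u} else ∅) ∪ (if G.Adj w u then {v} else ∅)) := by
    intro x hx
    simp only [mem_filter, mem_univ, true_and] at hx
    obtain ⟨hne, y, hwy, hxy⟩ := hx
    rcases (sup_adj _ _ _ _).mp hxy with hH | hE
    · exact mem_union_left _ (by simpa using ⟨hne, y, hwy, hH⟩)
    · obtain ⟨⟨rfl, rfl⟩ | ⟨rfl, rfl⟩, -⟩ := (edge_adj _ _ _ _).mp hE <;>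
        simp_all [mem_neighborSet]
  have hnew : #((if G.Adj w v then {u} else ∅) ∪ (if G.Adj w u then {v} else ∅) : Finset V) ≤
      (if G.Adj w v then 1 else 0) + (if G.Adj w u then 1 else 0) :=
    (card_union_le _ _).trans (by split_ifs <;> simp)
  have := (card_le_card hsub).trans (card_union_le _ _)
  unfold strongSharingCount
  omega

lemma card_deficient_neighbors_le {H : SimpleGraph V} (hGH : G ≤ H) (k : ℕ) (x : V) :
    #{w | G.Adj w x ∧ strongSharingCount G H w < k} ≤ k := by
  set D := ({w | G.Adj w x ∧ strongSharingCount G H w < k} : Finset V)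
  rcases D.eq_empty_or_nonempty with hD | ⟨w, hw⟩
  · simp [hD]
  obtain ⟨hwx, hwk⟩ := (mem_filter.mp hw).2
  have hsub :
      D.erase w ⊆ ({z | z ≠ w ∧ (G.neighborSet w ∩ H.neighborSet z).Nonempty} : Finset V) := by
    intro z hz
    obtain ⟨hzw, hzD⟩ := mem_erase.mp hz
    simp only [D, mem_filter, mem_univ, true_and] at hzD ⊢
    exact ⟨hzw, x, hwx, hGH hzD.1⟩
  have := card_erase_add_one hw
  have := card_le_card hsub
  unfold strongSharingCount at hwk
  omega

lemma residual_sub_residual_sup_edge_le (H : SimpleGraph V) (k : ℕ) (u v w : V) :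
    (k - strongSharingCount G H w) - (k - strongSharingCount G (H ⊔ edge u v) w) ≤
      (if G.Adj w v ∧ strongSharingCount G H w < k then 1 else 0) +
        (if G.Adj w u ∧ strongSharingCount G H w < k then 1 else 0) := by
  have := strongSharingCount_sup_edge_le G H u v w
  grind

end

theorem add_edge_strong_residual_drop_le_general {V : Type*} [Fintype V] (G H : SimpleGraph V)
    (hGH : G ≤ H) (k : ℕ) (u v : V) :
    strongTotalResidual G H k -
      strongTotalResidual G (H ⊔ SimpleGraph.fromEdgeSet {s(u, v)}) k ≤ 2 * k := by
  classical
  set c := strongSharingCount G H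
  calc strongTotalResidual G H k - strongTotalResidual G (H ⊔ edge u v) k
      = ∑ w, ((k - c w) - (k - strongSharingCount G (H ⊔ edge u v) w)) :=
        (sum_tsub_distrib _ fun w _ =>
          tsub_le_tsub_left (strongSharingCount_mono G le_sup_left w) k).symm
    _ ≤ ∑ w, ((if G.Adj w v ∧ c w < k then 1 else 0) + (if G.Adj w u ∧ c w < k then 1 else 0)) :=
        sum_le_sum fun w _ => residual_sub_residual_sup_edge_le G H k u v w
    _ = #{w | G.Adj w v ∧ c w < k} + #{w | G.Adj w u ∧ c w < k} := by
        rw [sum_add_distrib, card_filter, card_filter]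
    _ ≤ 2 * k :=
        (add_le_add (card_deficient_neighbors_le G hGH k v)
          (card_deficient_neighbors_le G hGH k u)).trans_eq (two_mul k).symm

/-- Adding a single edge `uv` to a supergraph `H` of `G` decreases the total strong
residual anonymity (for the `(k,1)`-requirement) by at most `2k`. -/
theorem add_edge_strong_residual_drop_le {V : Type*} [Fintype V] (G H : SimpleGraph V)
    (hGH : G ≤ H) (k : ℕ) (hk : 1 ≤ k) (u v : V) (huv : u ≠ v) :
    strongTotalResidual G H k -
      strongTotalResidual G (H ⊔ SimpleGraph.fromEdgeSet {s(u, v)}) k ≤ 2 * k :=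
  add_edge_strong_residual_drop_le_general G H hGH k u v
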